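/- There is a constant C > 0 (depending on φ) such that for all real t ≥ 1 and all k ∈ ℕ: ω_t(k) ≤ C/t, and |ω_t(k+1) − ω_t(k)| ≤ C/t². -/

import Mathlib

open MeasureTheory Set Filter Topology

/-- The Laplace-transform weights `ω_t(k) = ∫_1^2 φ(s) e^{−st}(st)^k/k! ds`. -/
noncomputable def omegaWeight (φ : ℝ → ℝ) (t : ℝ) (k : ℕ) : ℝ :=
  ∫ s in (1 : ℝ)..2, φ s * (Real.exp (-(s * t)) * (s * t) ^ k / (Nat.factorial k : ℝ))

noncomputable def poisW (k : ℕ) (x : ℝ) : ℝ := Real.exp (-x) * x ^ k / (Nat.factorial k : ℝ)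

lemma poisW_nonneg (k : ℕ) {x : ℝ} (hx : 0 ≤ x) : 0 ≤ poisW k x := by
  unfold poisW; positivity

lemma poisW_continuous (k : ℕ) : Continuous (poisW k) := by
  unfold poisW; fun_prop

lemma poisW_integrableOn (k : ℕ) : IntegrableOn (poisW k) (Ioi 0) := by
  have h := Real.GammaIntegral_convergent (s := (k + 1 : ℝ)) (by positivity)
  have h2 : IntegrableOn (fun x : ℝ => Real.exp (-x) * x ^ k) (Ioi 0) := by
    refine h.congr_fun (fun x hx => ?_) measurableSet_Ioi
    simp only [add_sub_cancel_right, Real.rpow_natCast]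
  exact h2.div_const _

lemma poisW_integral (k : ℕ) : ∫ x in Ioi (0:ℝ), poisW k x = 1 := by
  have h := Real.Gamma_eq_integral (s := (k + 1 : ℝ)) (by positivity)
  rw [Real.Gamma_nat_eq_factorial] at h
  have hcong : ∫ x in Ioi (0:ℝ), Real.exp (-x) * x ^ ((k+1:ℝ)-1) =
      ∫ x in Ioi (0:ℝ), Real.exp (-x) * x ^ k := by
    refine setIntegral_congr_fun measurableSet_Ioi (fun x hx => ?_)
    rw [add_sub_cancel_right, Real.rpow_natCast]
  unfold poisW
  rw [integral_div, ← hcong, ← h, div_self (by exact_mod_cast (Nat.factorial_ne_zero k))]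

lemma poisW_interval_le (k : ℕ) {a b : ℝ} (ha : 0 ≤ a) (hab : a ≤ b) :
    ∫ x in a..b, poisW k x ≤ 1 := by
  rw [intervalIntegral.integral_of_le hab, ← poisW_integral k]
  refine setIntegral_mono_set (poisW_integrableOn k) ?_ ?_
  · filter_upwards [ae_restrict_mem measurableSet_Ioi] with x hx
    exact poisW_nonneg k (le_of_lt hx)
  · filter_upwards with x hx
    exact lt_of_le_of_lt ha hx.1

lemma hasDerivAt_poisW_succ (k : ℕ) (y : ℝ) :
    HasDerivAt (poisW (k+1)) (poisW k y - poisW (k+1) y) y := by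
  have he : HasDerivAt (fun y : ℝ => Real.exp (-y)) (-Real.exp (-y)) y := by
    simpa using (hasDerivAt_neg y).exp
  have hp : HasDerivAt (fun y : ℝ => y ^ (k+1)) ((k+1 : ℕ) * y ^ k) y := by
    simpa using hasDerivAt_pow (k+1) y
  have h : HasDerivAt (poisW (k+1)) _ y := (he.mul hp).div_const ((k+1).factorial : ℝ)
  convert h using 1
  unfold poisW
  have hk : (k.factorial : ℝ) ≠ 0 := by exact_mod_cast Nat.factorial_ne_zero k
  have hk1 : ((k+1).factorial : ℝ) = (k+1) * (k.factorial : ℝ) := by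
    rw [Nat.factorial_succ]; push_cast; ring
  rw [hk1]
  field_simp
  push_cast; ring

lemma poisW_comp_integral_le (k : ℕ) {t : ℝ} (ht : 1 ≤ t) :
    ∫ s in (1:ℝ)..2, poisW k (s * t) ≤ 1 / t := by
  have ht0 : (0:ℝ) < t := lt_of_lt_of_le one_pos ht
  rw [intervalIntegral.integral_comp_mul_right (poisW k) ht0.ne']
  simp only [smul_eq_mul, one_mul]
  have h := poisW_interval_le k ht0.le (by linarith : t ≤ 2 * t)
  calc t⁻¹ * ∫ x in t..2*t, poisW k x ≤ t⁻¹ * 1 :=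
        mul_le_mul_of_nonneg_left h (inv_nonneg.mpr ht0.le)
    _ = 1 / t := by rw [mul_one, one_div]

theorem omegaWeight_bound_and_derivative' (φ : ℝ → ℝ)
    (hsmooth : ContDiff ℝ (⊤ : ℕ∞) φ) (hnonneg : ∀ x, 0 ≤ φ x)
    (hsupp : Function.support φ ⊆ Set.Icc 1 2)
    (hint : ∫ x, φ x = 1) :
    ∃ C : ℝ, 0 < C ∧ ∀ t : ℝ, 1 ≤ t → ∀ k : ℕ,
      (∫ s in (1:ℝ)..2, φ s * poisW k (s*t)) ≤ C / t ∧
      |(∫ s in (1:ℝ)..2, φ s * poisW (k+1) (s*t)) - ∫ s in (1:ℝ)..2, φ s * poisW k (s*t)| ≤ C / t ^ 2 := by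
  have hcont := hsmooth.continuous
  have hzero : ∀ x, x ∉ Icc (1:ℝ) 2 → φ x = 0 := fun x hx => by
    by_contra h; exact hx (hsupp h)
  have hcs : HasCompactSupport φ := HasCompactSupport.intro isCompact_Icc hzero
  obtain ⟨C1, hC1⟩ := hcs.exists_bound_of_continuous hcont
  obtain ⟨C2, hC2⟩ := hcs.deriv.exists_bound_of_continuous (hsmooth.continuous_deriv (by simp))
  set C : ℝ := max C1 C2 + 1 with hC
  have hC1C : C1 ≤ C := by simp [hC]; linarith [le_max_left C1 C2]
  have hC2C : C2 ≤ C := by simp [hC]; linarith [le_max_right C1 C2]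
  have hCpos : 0 < C := by
    have := (norm_nonneg (φ 0)).trans (hC1 0)
    simp [hC]; linarith [le_max_left C1 C2]
  have hφ1 : φ 1 = 0 := by
    have ht : Tendsto φ (𝓝[<] (1:ℝ)) (𝓝 (φ 1)) :=
      (hcont.tendsto 1).mono_left nhdsWithin_le_nhds
    have ht0 : Tendsto φ (𝓝[<] (1:ℝ)) (𝓝 0) := by
      refine Tendsto.congr' ?_ tendsto_const_nhds
      filter_upwards [self_mem_nhdsWithin] with x hx
      exact (hzero x (fun hmem => absurd hmem.1 (not_le.mpr hx))).symm
    exact tendsto_nhds_unique ht ht0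
  have hφ2 : φ 2 = 0 := by
    have ht : Tendsto φ (𝓝[>] (2:ℝ)) (𝓝 (φ 2)) :=
      (hcont.tendsto 2).mono_left nhdsWithin_le_nhds
    have ht0 : Tendsto φ (𝓝[>] (2:ℝ)) (𝓝 0) := by
      refine Tendsto.congr' ?_ tendsto_const_nhds
      filter_upwards [self_mem_nhdsWithin] with x hx
      exact (hzero x (fun hmem => absurd hmem.2 (not_le.mpr hx))).symm
    exact tendsto_nhds_unique ht ht0
  refine ⟨C, hCpos, fun t ht k => ?_⟩
  have ht0 : (0:ℝ) < t := lt_of_lt_of_le one_pos ht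
  have hcontc : ∀ j : ℕ, Continuous (fun s : ℝ => poisW j (s * t)) :=
    fun j => (poisW_continuous j).comp (continuous_id.mul continuous_const)
  have hii : ∀ j : ℕ, IntervalIntegrable (fun s => φ s * poisW j (s * t)) volume 1 2 :=
    fun j => (hcont.mul (hcontc j)).intervalIntegrable 1 2
  have hiiC : ∀ j : ℕ, IntervalIntegrable (fun s => C * poisW j (s * t)) volume 1 2 :=
    fun j => (continuous_const.mul (hcontc j)).intervalIntegrable 1 2
  have hiid : ∀ j : ℕ, IntervalIntegrable (fun s => deriv φ s * poisW j (s * t)) volume 1 2 :=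
    fun j => ((hsmooth.continuous_deriv (by simp)).mul (hcontc j)).intervalIntegrable 1 2
  have hiida : ∀ j : ℕ, IntervalIntegrable (fun s => |deriv φ s * poisW j (s * t)|) volume 1 2 :=
    fun j => (((hsmooth.continuous_deriv (by simp)).mul (hcontc j)).abs).intervalIntegrable 1 2
  have hposp : ∀ j : ℕ, ∀ s ∈ Icc (1:ℝ) 2, 0 ≤ poisW j (s * t) :=
    fun j s hs => poisW_nonneg j (by nlinarith [hs.1])
  have hCbound : ∀ j : ℕ, (∫ s in (1:ℝ)..2, C * poisW j (s * t)) ≤ C / t := by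
    intro j
    rw [intervalIntegral.integral_const_mul]
    calc C * ∫ s in (1:ℝ)..2, poisW j (s * t) ≤ C * (1 / t) :=
          mul_le_mul_of_nonneg_left (poisW_comp_integral_le j ht) hCpos.le
      _ = C / t := by ring
  constructor
  · calc (∫ s in (1:ℝ)..2, φ s * poisW k (s*t)) ≤ ∫ s in (1:ℝ)..2, C * poisW k (s*t) := by
          refine intervalIntegral.integral_mono_on one_le_two (hii k) (hiiC k) (fun s hs => ?_)
          exact mul_le_mul_of_nonneg_right
            (((le_abs_self _).trans (hC1 s)).trans hC1C) (hposp k s hs)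
      _ ≤ C / t := hCbound k
  · -- integration by parts
    have hu : ∀ x ∈ uIcc (1:ℝ) 2, HasDerivAt φ (deriv φ x) x :=
      fun x _ => (hsmooth.differentiable (by simp) x).hasDerivAt
    have hv : ∀ x ∈ uIcc (1:ℝ) 2,
        HasDerivAt (fun s => poisW (k+1) (s * t))
          ((poisW k (x*t) - poisW (k+1) (x*t)) * t) x :=
      fun x _ => by have := (hasDerivAt_poisW_succ k (x*t)).comp x (hasDerivAt_mul_const t); exact this
    have hu' : IntervalIntegrable (deriv φ) volume 1 2 :=
      (hsmooth.continuous_deriv (by simp)).intervalIntegrable 1 2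
    have hv' : IntervalIntegrable (fun s => (poisW k (s*t) - poisW (k+1) (s*t)) * t) volume 1 2 :=
      (((hcontc k).sub (hcontc (k+1))).mul continuous_const).intervalIntegrable 1 2
    have hparts := intervalIntegral.integral_mul_deriv_eq_deriv_mul hu hv hu' hv'
    rw [hφ1, hφ2, zero_mul, zero_mul, sub_zero, zero_sub] at hparts
    have hlhs : (∫ x in (1:ℝ)..2, φ x * ((poisW k (x*t) - poisW (k+1) (x*t)) * t))
        = t * ((∫ s in (1:ℝ)..2, φ s * poisW k (s*t)) - ∫ s in (1:ℝ)..2, φ s * poisW (k+1) (s*t)) := by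
      rw [← intervalIntegral.integral_sub (hii k) (hii (k+1)), ← intervalIntegral.integral_const_mul]
      exact intervalIntegral.integral_congr (fun x _ => by ring)
    rw [hlhs] at hparts
    have habs : |∫ x in (1:ℝ)..2, deriv φ x * poisW (k+1) (x*t)| ≤ C / t := by
      calc |∫ x in (1:ℝ)..2, deriv φ x * poisW (k+1) (x*t)|
          ≤ ∫ x in (1:ℝ)..2, |deriv φ x * poisW (k+1) (x*t)| :=
            intervalIntegral.abs_integral_le_integral_abs one_le_two
        _ ≤ ∫ x in (1:ℝ)..2, C * poisW (k+1) (x*t) := by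
            refine intervalIntegral.integral_mono_on one_le_two (hiida _) (hiiC _) (fun s hs => ?_)
            rw [abs_mul, abs_of_nonneg (hposp (k+1) s hs)]
            exact mul_le_mul_of_nonneg_right ((hC2 s).trans hC2C) (hposp (k+1) s hs)
        _ ≤ C / t := hCbound (k+1)
    have hdiff : (∫ s in (1:ℝ)..2, φ s * poisW (k+1) (s*t)) - (∫ s in (1:ℝ)..2, φ s * poisW k (s*t))
        = (∫ x in (1:ℝ)..2, deriv φ x * poisW (k+1) (x*t)) / t := by
      have := hparts
      rw [eq_div_iff ht0.ne']
      linarith [this]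
    rw [hdiff, abs_div, abs_of_pos ht0]
    rw [div_le_div_iff₀ ht0 (by positivity)]
    calc |∫ x in (1:ℝ)..2, deriv φ x * poisW (k+1) (x*t)| * t ^ 2
        ≤ (C / t) * t ^ 2 := mul_le_mul_of_nonneg_right habs (by positivity)
      _ = C * t := by field_simp

/-- For a smooth bump `φ ≥ 0` supported in `[1,2]` with `∫ φ = 1`, there is a constant
`C > 0` (depending on `φ`) such that for all `t ≥ 1` and all `k ∈ ℕ`:
`ω_t(k) ≤ C/t` and `|ω_t(k+1) − ω_t(k)| ≤ C/t²`. -/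
theorem omegaWeight_bound_and_derivative (φ : ℝ → ℝ)
    (hsmooth : ContDiff ℝ (⊤ : ℕ∞) φ) (hnonneg : ∀ x, 0 ≤ φ x)
    (hsupp : Function.support φ ⊆ Set.Icc 1 2)
    (hint : ∫ x, φ x = 1) :
    ∃ C : ℝ, 0 < C ∧ ∀ t : ℝ, 1 ≤ t → ∀ k : ℕ,
      omegaWeight φ t k ≤ C / t ∧
      |omegaWeight φ t (k + 1) - omegaWeight φ t k| ≤ C / t ^ 2 := by
  obtain ⟨C, hC, h⟩ := omegaWeight_bound_and_derivative' φ hsmooth hnonneg hsupp hint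
  exact ⟨C, hC, fun t ht k => h t ht k⟩
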